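/- For all integers a, b ≥ 0 with n = a+b+1, the 2-adic valuation of c_{a,b} is given exactly by v_2(c_{a,b}) = 2 − 2n + v_2(n) + v_2( C(2n−1, 2b) ). -/

import Mathlib

/-!
Put `n = a + b + 1`. By symmetry `C(2n, 2a+2) = C(2n, 2b)`, so
`c_{a,b} = ± 2^{1-2n} (C(2n, 2b+1) + 2^{2n} (C(2n, 2b) - C(2n, 2b+1)))`.
Since `0 < C(2n, 2b+1) < 2^{2n}`, the ultrametric inequality gives
`v₂(c_{a,b}) = 1 - 2n + v₂(C(2n, 2b+1))`, and `2n C(2n-1, 2b) = (2b+1) C(2n, 2b+1)` with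
`2b+1` odd turns `v₂(C(2n, 2b+1))` into `1 + v₂(n) + v₂(C(2n-1, 2b))`.
-/

/-- The coefficient `c_{a,b} = 2(−1)^n (C(2n,2a+2) − (1−2^{−2n}) C(2n,2b+1))`
with `n = a+b+1`, appearing in Zagier's evaluation of `ζ(2^{a},3,2^{b})`. -/
noncomputable def zagierCoeff (a b : ℕ) : ℚ :=
  2 * (-1) ^ (a + b + 1) *
    (((2 * (a + b + 1)).choose (2 * a + 2) : ℚ) -
      (1 - (2 : ℚ) ^ (-(2 * (a + b + 1) : ℤ))) * ((2 * (a + b + 1)).choose (2 * b + 1) : ℚ))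

namespace padicValRat

theorem neg_one_pow_mul {p : ℕ} (n : ℕ) (q : ℚ) :
    padicValRat p ((-1) ^ n * q) = padicValRat p q := by
  rcases neg_one_pow_eq_or ℚ n with h | h <;> simp [h, padicValRat.neg]

variable {p : ℕ} [Fact p.Prime]

theorem prime_zpow_mul (k : ℤ) {q : ℚ} (hq : q ≠ 0) :
    padicValRat p ((p : ℚ) ^ k * q) = k + padicValRat p q := by
  have hp : (p : ℚ) ≠ 0 := by exact_mod_cast (Fact.out : p.Prime).ne_zero
  rw [padicValRat.mul (zpow_ne_zero k hp) hq, padicValRat.zpow,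
    padicValRat.self (Fact.out : p.Prime).one_lt, mul_one]

theorem le_prime_pow_mul_int (e : ℕ) {m : ℤ} (hm : m ≠ 0) :
    (e : ℤ) ≤ padicValRat p ((p : ℚ) ^ e * m) := by
  have hm' : (m : ℚ) ≠ 0 := by exact_mod_cast hm
  rw [← zpow_natCast, prime_zpow_mul _ hm', padicValRat.of_int]
  omega

theorem add_prime_pow_mul_int_ne_zero {q : ℚ} (hq : q ≠ 0) {e : ℕ} (he : padicValRat p q < e)
    (m : ℤ) : q + (p : ℚ) ^ e * m ≠ 0 := by
  rcases eq_or_ne m 0 with rfl | hm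
  · simpa using hq
  intro h
  have := le_prime_pow_mul_int (p := p) e hm
  rw [eq_neg_of_add_eq_zero_right h, padicValRat.neg] at this
  omega

theorem add_prime_pow_mul_int {q : ℚ} (hq : q ≠ 0) {e : ℕ} (he : padicValRat p q < e) (m : ℤ) :
    padicValRat p (q + (p : ℚ) ^ e * m) = padicValRat p q := by
  rcases eq_or_ne m 0 with rfl | hm
  · simp
  have hp : (p : ℚ) ≠ 0 := by exact_mod_cast (Fact.out : p.Prime).ne_zero
  exact add_eq_of_lt (add_prime_pow_mul_int_ne_zero hq he m) hq
    (mul_ne_zero (pow_ne_zero e hp) (by exact_mod_cast hm))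
    (he.trans_le (le_prime_pow_mul_int e hm))

end padicValRat

theorem padicValNat_lt_of_lt_pow {p k e : ℕ} (hp : 1 < p) (hk : k ≠ 0) (h : k < p ^ e) :
    padicValNat p k < e :=
  (Nat.pow_lt_pow_iff_right hp).mp <|
    (Nat.le_of_dvd (Nat.pos_of_ne_zero hk) pow_padicValNat_dvd).trans_lt h

theorem padicValNat_choose_add_one_add_one {p m k : ℕ} [Fact p.Prime] (hk : k ≤ m)
    (hpk : ¬p ∣ k + 1) :
    padicValNat p ((m + 1).choose (k + 1)) = padicValNat p (m + 1) + padicValNat p (m.choose k) := by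
  have h := congrArg (padicValNat p) (Nat.add_one_mul_choose_eq m k)
  rwa [padicValNat.mul m.succ_ne_zero (Nat.choose_pos hk).ne',
    padicValNat.mul (Nat.choose_pos (Nat.succ_le_succ hk)).ne' k.succ_ne_zero,
    padicValNat.eq_zero_of_not_dvd hpk, add_zero, eq_comm] at h

theorem zagierCoeff_eq (a b : ℕ) :
    zagierCoeff a b = (-1) ^ (a + b + 1) * (2 : ℚ) ^ (1 - 2 * ((a + b + 1 : ℕ) : ℤ)) *
      ((2 * (a + b + 1)).choose (2 * b + 1) + (2 : ℚ) ^ (2 * (a + b + 1)) *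
        (((2 * (a + b + 1)).choose (2 * b) : ℤ) - (2 * (a + b + 1)).choose (2 * b + 1) : ℤ)) := by
  have hneg : (2 : ℚ) ^ (-(2 * (a + b + 1) : ℤ)) = ((2 : ℚ) ^ (2 * (a + b + 1)))⁻¹ := by
    rw [zpow_neg]; norm_cast
  have hsub : (2 : ℚ) ^ (1 - 2 * ((a + b + 1 : ℕ) : ℤ)) = 2 / 2 ^ (2 * (a + b + 1)) := by
    rw [zpow_sub₀ two_ne_zero, zpow_one]; norm_cast
  rw [zagierCoeff, Nat.choose_symm_of_eq_add (by omega : 2 * (a + b + 1) = (2 * a + 2) + 2 * b),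
    hneg, hsub]
  push_cast
  field_simp
  ring

/-- `v₂(c_{a,b}) = 2 − 2n + v₂(n) + v₂(C(2n−1, 2b))` where `n = a+b+1`. -/
theorem zagierCoeff_two_adic_valuation (a b : ℕ) :
    padicValRat 2 (zagierCoeff a b) =
      (2 : ℤ) - 2 * (a + b + 1 : ℤ) + (padicValNat 2 (a + b + 1) : ℤ) +
        (padicValNat 2 ((2 * (a + b + 1) - 1).choose (2 * b)) : ℤ) := by
  set n := a + b + 1
  have hC : (2 * n).choose (2 * b + 1) ≠ 0 := (Nat.choose_pos (by omega)).ne'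
  have hC' : ((2 * n).choose (2 * b + 1) : ℚ) ≠ 0 := by exact_mod_cast hC
  have hlt : padicValRat 2 ((2 * n).choose (2 * b + 1) : ℚ) < (2 * n : ℕ) := by
    rw [padicValRat.of_nat]
    exact_mod_cast padicValNat_lt_of_lt_pow one_lt_two hC (Nat.choose_lt_two_pow _ _ (by omega))
  have hchoose : (2 * n).choose (2 * b + 1) = (2 * n - 1 + 1).choose (2 * b + 1) := by
    rw [Nat.sub_add_cancel (by omega)]
  have h2n : padicValNat 2 (2 * n) = 1 + padicValNat 2 n := by
    rw [padicValNat.mul two_ne_zero (by omega), padicValNat.self one_lt_two]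
  set X : ℤ := ((2 * n).choose (2 * b) : ℤ) - (2 * n).choose (2 * b + 1)
  have hX := padicValRat.add_prime_pow_mul_int_ne_zero (p := 2) hC' hlt X
  have hvX := padicValRat.add_prime_pow_mul_int (p := 2) hC' hlt X
  have hshift := padicValRat.prime_zpow_mul (p := 2) (1 - 2 * n) hX
  simp only [Nat.cast_ofNat] at hX hvX hshift
  rw [zagierCoeff_eq, mul_assoc, padicValRat.neg_one_pow_mul, hshift, hvX, padicValRat.of_nat,
    hchoose, padicValNat_choose_add_one_add_one (by omega) (by omega),
    Nat.sub_add_cancel (by omega), h2n]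
  push_cast [n]
  ring
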